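/- arXiv:1811.07507 — 5 statements merged into one kernel-verified Lean document; each statement's English description precedes it below -/
import Mathlib

section
/- Let K be the reference prism with bottom face F₄ = {(x,y,-1) : x,y ≥ 0, x+y ≤ 1} and top face F₅ = {(x,y,1) : x,y ≥ 0, x+y ≤ 1}. For a function v on K, let I_{F₄}v (respectively I_{F₅}v) be the unique element of span{f₁,f₂,f₃,f₄} (functions of (x,y) only) interpolating v at V₁,V₂,V₃,M₄ (respectively at V₄,V₅,V₆,M₅). Then for every v in P_K = P₂(ℝ³) ⊕ span{φ}, the function of (x,y) given by v(x,y,-1) − (I_{F₄}v)(x,y) equals the function v(x,y,1) − (I_{F₅}v)(x,y). -/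
noncomputable section

def phi (x y z : ℝ) : ℝ :=
  (5/12) * z * (z^2 - 1) + z * ((1-x-y)*x + x*y + y*(1-x-y))

/-- Membership in `P_K = P₂(ℝ³) ⊕ span{φ}`. -/
def InPK (v : ℝ → ℝ → ℝ → ℝ) : Prop :=
  ∃ (p : MvPolynomial (Fin 3) ℝ) (c : ℝ), p.totalDegree ≤ 2 ∧
    ∀ x y z : ℝ, v x y z = MvPolynomial.eval ![x, y, z] p + c * phi x y z

def f1 (x y : ℝ) : ℝ := (1-x-y) - ((1-x-y)*x + x*y + y*(1-x-y))
def f2 (x y : ℝ) : ℝ := x - ((1-x-y)*x + x*y + y*(1-x-y))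
def f3 (x y : ℝ) : ℝ := y - ((1-x-y)*x + x*y + y*(1-x-y))
def f4 (x y : ℝ) : ℝ := 3 * ((1-x-y)*x + x*y + y*(1-x-y))

/-- Membership in `span{f₁,f₂,f₃,f₄}`. -/
def InSpanF (g : ℝ → ℝ → ℝ) : Prop :=
  ∃ a b c d : ℝ, ∀ x y : ℝ,
    g x y = a * f1 x y + b * f2 x y + c * f3 x y + d * f4 x y

/-! The residual difference is `v(·,1) - v(·,-1) - (I_{F₅}v - I_{F₄}v)`. The jump
`v(·,1) - v(·,-1)` of `v ∈ P_K` only sees the part of `v` odd in `z`: an affine function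
of `(x, y)` from `P₂`, plus twice the bubble `λ₁λ₂ + λ₂λ₃ + λ₃λ₁` from `φ`. Hence it
lies in `span{f₁,f₂,f₃,f₄}`, and so does `I_{F₅}v - I_{F₄}v`. Both interpolate the same
data at the nodes, so they coincide by unisolvence. -/

open MvPolynomial

lemma exists_affine_eq_monomial_odd_part {a b k : ℕ} (h : a + b + k ≤ 2) :
    ∃ α β γ : ℝ, ∀ x y : ℝ, x ^ a * y ^ b * (1 ^ k - (-1) ^ k) = α + β * x + γ * y := by
  rcases Nat.even_or_odd k with hk | hk
  · exact ⟨0, 0, 0, fun x y => by simp [hk.neg_one_pow]⟩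
  · obtain rfl : k = 1 := by obtain ⟨m, rfl⟩ := hk; omega
    rcases a with _ | _ | a <;> rcases b with _ | _ | b <;> try omega
    · exact ⟨2, 0, 0, fun x y => by ring⟩
    · exact ⟨0, 0, 2, fun x y => by ring⟩
    · exact ⟨0, 2, 0, fun x y => by ring⟩

lemma exists_affine_eval_one_sub_eval_neg_one (p : MvPolynomial (Fin 3) ℝ)
    (hp : p.totalDegree ≤ 2) :
    ∃ α β γ : ℝ, ∀ x y : ℝ, eval ![x, y, 1] p - eval ![x, y, -1] p = α + β * x + γ * y := by
  have hmono : ∀ d ∈ p.support, ∃ α β γ : ℝ, ∀ x y : ℝ,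
      x ^ d 0 * y ^ d 1 * (1 ^ d 2 - (-1) ^ d 2) = α + β * x + γ * y := by
    intro d hd
    apply exists_affine_eq_monomial_odd_part
    have hdeg := le_totalDegree hd
    rw [Finsupp.sum_fintype _ _ fun _ => rfl, Fin.sum_univ_three] at hdeg
    omega
  choose α β γ hαβγ using hmono
  refine ⟨∑ d ∈ p.support.attach, p.coeff d * α d d.2,
    ∑ d ∈ p.support.attach, p.coeff d * β d d.2,
    ∑ d ∈ p.support.attach, p.coeff d * γ d d.2, fun x y => ?_⟩
  rw [eval_eq', eval_eq', ← Finset.sum_sub_distrib, ← Finset.sum_attach]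
  simp only [Finset.sum_mul, ← Finset.sum_add_distrib]
  refine Finset.sum_congr rfl fun d _ => ?_
  simp only [Fin.prod_univ_three, Matrix.cons_val_zero, Matrix.cons_val_one, Matrix.cons_val_two,
    Matrix.head_cons, Matrix.tail_cons]
  linear_combination p.coeff d * hαβγ d d.2 x y

lemma inSpanF_affine_add_bubble (α β γ δ : ℝ) :
    InSpanF fun x y => α + β * x + γ * y + δ * ((1-x-y)*x + x*y + y*(1-x-y)) :=
  ⟨α, α + β, α + γ, α + (β + γ + δ) / 3, fun x y => by simp only [f1, f2, f3, f4]; ring⟩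

lemma InSpanF.add {g h : ℝ → ℝ → ℝ} (hg : InSpanF g) (hh : InSpanF h) :
    InSpanF fun x y => g x y + h x y := by
  obtain ⟨a, b, c, d, hg⟩ := hg
  obtain ⟨a', b', c', d', hh⟩ := hh
  exact ⟨a + a', b + b', c + c', d + d', fun x y => by simp only [hg, hh]; ring⟩

lemma InSpanF.eq_lagrange {g : ℝ → ℝ → ℝ} (hg : InSpanF g) (x y : ℝ) :
    g x y = g 0 0 * f1 x y + g 1 0 * f2 x y + g 0 1 * f3 x y + g (1/3) (1/3) * f4 x y := by
  obtain ⟨a, b, c, d, hg⟩ := hg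
  simp only [hg, f1, f2, f3, f4]
  ring

lemma InSpanF.eq_of_eq_at_nodes {g h : ℝ → ℝ → ℝ} (hg : InSpanF g) (hh : InSpanF h)
    (h00 : g 0 0 = h 0 0) (h10 : g 1 0 = h 1 0) (h01 : g 0 1 = h 0 1)
    (hM : g (1/3) (1/3) = h (1/3) (1/3)) (x y : ℝ) : g x y = h x y := by
  rw [hg.eq_lagrange, hh.eq_lagrange, h00, h10, h01, hM]

lemma InPK.inSpanF_top_sub_bottom {v : ℝ → ℝ → ℝ → ℝ} (hv : InPK v) :
    InSpanF fun x y => v x y 1 - v x y (-1) := by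
  obtain ⟨p, c, hp, hv⟩ := hv
  obtain ⟨α, β, γ, hαβγ⟩ := exists_affine_eval_one_sub_eval_neg_one p hp
  convert inSpanF_affine_add_bubble α β γ (2 * c) using 3 with x y
  rw [hv, hv, ← hαβγ, phi, phi]
  ring

/-- For every `v ∈ P_K`, the interpolation residuals on the bottom and top
faces coincide: `v|_{F₄} − I_{F₄}v = v|_{F₅} − I_{F₅}v`. Here `g₄ = I_{F₄}v`
(resp. `g₅ = I_{F₅}v`) is the element of `span{f₁,f₂,f₃,f₄}` interpolating `v`
at `V₁,V₂,V₃,M₄` (resp. `V₄,V₅,V₆,M₅`). -/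
theorem top_bottom_residual_equal (v : ℝ → ℝ → ℝ → ℝ) (hv : InPK v)
    (g4 g5 : ℝ → ℝ → ℝ) (hg4 : InSpanF g4) (hg5 : InSpanF g5)
    (h41 : g4 0 0 = v 0 0 (-1)) (h42 : g4 1 0 = v 1 0 (-1))
    (h43 : g4 0 1 = v 0 1 (-1)) (h44 : g4 (1/3) (1/3) = v (1/3) (1/3) (-1))
    (h51 : g5 0 0 = v 0 0 1) (h52 : g5 1 0 = v 1 0 1)
    (h53 : g5 0 1 = v 0 1 1) (h54 : g5 (1/3) (1/3) = v (1/3) (1/3) 1) :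
    ∀ x y : ℝ, v x y (-1) - g4 x y = v x y 1 - g5 x y := by
  intro x y
  have hjump := hv.inSpanF_top_sub_bottom.add hg4
  have := hg5.eq_of_eq_at_nodes hjump (by linarith) (by linarith) (by linarith) (by linarith) x y
  linarith
end
end

section
/- Let φ = (5/12)z(z²−1) + z(λ₁λ₂+λ₂λ₃+λ₃λ₁) with λ₁ = 1−x−y, λ₂ = x, λ₃ = y, and let F₁ be the side face of the reference prism with vertices V₂=(1,0,-1), V₃=(0,1,-1), V₆=(0,1,1), V₅=(1,0,1), i.e. F₁ = {(x,y,z) : x+y = 1, 0 ≤ x ≤ 1, -1 ≤ z ≤ 1}. Let ξ₁ be the affine function on F₁ with ξ₁(V₃) = ξ₁(V₆) = 1 and ξ₁(V₂) = ξ₁(V₅) = −1 (namely ξ₁ = y − x on F₁). Then ∫_{F₁} φ ξ₁ dσ = 0. -/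
/-!
Exchanging `x` and `y` fixes `φ` but changes the sign of `ξ₁ = y - x`; on `F₁` this is the
reflection `x ↦ 1 - x` about the line `ξ₁ = 0`, so `φ ξ₁` is antisymmetric there and integrates
to zero.
-/

noncomputable section

theorem phi_comm (x y z : ℝ) : phi x y z = phi y x z := by
  unfold phi
  ring

theorem intervalIntegral.integral_eq_zero_of_antisymm {E : Type*} [NormedAddCommGroup E]
    [NormedSpace ℝ E] {f : ℝ → E} {a b : ℝ} (hf : ∀ x, f (a + b - x) = -f x) :
    ∫ x in a..b, f x = 0 := by
  have h_neg : ∫ x in a..b, f x = -∫ x in a..b, f x := calc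
    ∫ x in a..b, f x = ∫ x in a..b, f (a + b - x) := by
      rw [intervalIntegral.integral_comp_sub_left]
      simp only [add_sub_cancel_right, add_sub_cancel_left]
    _ = -∫ x in a..b, f x := by simp only [hf, intervalIntegral.integral_neg]
  have h_two_smul : (2 : ℝ) • ∫ x in a..b, f x = 0 := by
    rw [two_smul]
    nth_rewrite 2 [h_neg]
    exact add_neg_cancel _
  exact (smul_eq_zero.mp h_two_smul).resolve_left two_ne_zero

/-- `F₁` is parametrized by `(x, z) ↦ (x, 1 - x, z)`, with surface element `dσ = √2 dx dz`. -/
theorem phi_xi_integral_zero :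
    Real.sqrt 2 * (∫ x in (0:ℝ)..1, ∫ z in (-1:ℝ)..1,
      phi x (1-x) z * ((1-x) - x)) = 0 := by
  rw [intervalIntegral.integral_eq_zero_of_antisymm, mul_zero]
  intro x
  rw [← intervalIntegral.integral_neg]
  refine intervalIntegral.integral_congr fun z _ => ?_
  simp only [zero_add, sub_sub_cancel, phi_comm (1 - x) x]
  ring
end
end

section
/- Let K be the reference prism and let v ∈ P_K = P₂(ℝ³) ⊕ span{φ}, where φ = (5/12)z(z²−1) + z(λ₁λ₂+λ₂λ₃+λ₃λ₁), λ₁=1−x−y, λ₂=x, λ₃=y. Let F₁ = {(x,y,z) : x+y=1, 0≤x≤1, -1≤z≤1} with vertices V₂=(1,0,-1), V₃=(0,1,-1), V₅=(1,0,1), V₆=(0,1,1) and centroid M₁=(1/2,1/2,0). Then (1/|F₁|) ∫_{F₁} v dσ = (1/12)(v(V₂) + v(V₃) + v(V₅) + v(V₆)) + (2/3) v(M₁), where |F₁| = 2√2. -/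
noncomputable section

open intervalIntegral

lemma poly01 (a b c : ℝ) : ∫ x in (0:ℝ)..1, (a + b*x + c*x^2) = a + b/2 + c/3 := by
  have h1 : IntervalIntegrable (fun x:ℝ => a + b*x) MeasureTheory.volume 0 1 :=
    (by continuity : Continuous fun x:ℝ => a + b*x).intervalIntegrable _ _
  have h2 : IntervalIntegrable (fun x:ℝ => c*x^2) MeasureTheory.volume 0 1 :=
    (by continuity : Continuous fun x:ℝ => c*x^2).intervalIntegrable _ _
  have h4 : IntervalIntegrable (fun x:ℝ => b*x) MeasureTheory.volume 0 1 :=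
    (by continuity : Continuous fun x:ℝ => b*x).intervalIntegrable _ _
  rw [integral_add h1 h2, integral_add intervalIntegrable_const h4, integral_const_mul,
    integral_const_mul, integral_pow, integral_id, integral_const]
  norm_num; ring

/-- value of the inner z-integral of z^k over [-1,1] -/
def Ck (k : ℕ) : ℝ := ((1:ℝ)^(k+1) - (-1:ℝ)^(k+1))/((k:ℝ)+1)

lemma quad' (i j k : ℕ) (h : i + j + k ≤ 2) :
    (∫ x in (0:ℝ)..1, x^i*(1-x)^j*Ck k) =
      2 * ((1/12) * ((1:ℝ)^i * 0^j * (-1:ℝ)^k + 0^i * 1^j * (-1:ℝ)^k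
        + (1:ℝ)^i * 0^j * 1^k + 0^i * 1^j * 1^k)
      + (2/3) * ((1/2:ℝ)^i * (1/2:ℝ)^j * (0:ℝ)^k)) := by
  have hi : i ≤ 2 := by omega
  have hj : j ≤ 2 := by omega
  have hk : k ≤ 2 := by omega
  unfold Ck
  interval_cases i <;> interval_cases j <;> interval_cases k <;> try omega
  · rw [integral_congr (g := fun x:ℝ => (2:ℝ) + 0*x + 0*x^2)
      (fun x _ => by push_cast; ring_nf), poly01]
    norm_num
  · rw [integral_congr (g := fun x:ℝ => (0:ℝ) + 0*x + 0*x^2)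
      (fun x _ => by push_cast; ring_nf), poly01]
    norm_num
  · rw [integral_congr (g := fun x:ℝ => (2/3:ℝ) + 0*x + 0*x^2)
      (fun x _ => by push_cast; ring_nf), poly01]
    norm_num
  · rw [integral_congr (g := fun x:ℝ => (2:ℝ) + (-2)*x + 0*x^2)
      (fun x _ => by push_cast; ring_nf), poly01]
    norm_num
  · rw [integral_congr (g := fun x:ℝ => (0:ℝ) + 0*x + 0*x^2)
      (fun x _ => by push_cast; ring_nf), poly01]
    norm_num
  · rw [integral_congr (g := fun x:ℝ => (2:ℝ) + (-4)*x + 2*x^2)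
      (fun x _ => by push_cast; ring_nf), poly01]
    norm_num
  · rw [integral_congr (g := fun x:ℝ => (0:ℝ) + 2*x + 0*x^2)
      (fun x _ => by push_cast; ring_nf), poly01]
    norm_num
  · rw [integral_congr (g := fun x:ℝ => (0:ℝ) + 0*x + 0*x^2)
      (fun x _ => by push_cast; ring_nf), poly01]
    norm_num
  · rw [integral_congr (g := fun x:ℝ => (0:ℝ) + 2*x + (-2)*x^2)
      (fun x _ => by push_cast; ring_nf), poly01]
    norm_num
  · rw [integral_congr (g := fun x:ℝ => (0:ℝ) + 0*x + 2*x^2)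
      (fun x _ => by push_cast; ring_nf), poly01]
    norm_num

/-- Mean-value quadrature identity on the side face
`F₁ = {x+y=1, 0 ≤ x ≤ 1, -1 ≤ z ≤ 1}` of the reference prism (area `2√2`,
surface element `dσ = √2 dx dz`): for all `v ∈ P_K`,
`(1/|F₁|)∫_{F₁} v dσ = (1/12)(v(V₂)+v(V₃)+v(V₅)+v(V₆)) + (2/3) v(M₁)`. -/
theorem side_face_mean_value (v : ℝ → ℝ → ℝ → ℝ) (hv : InPK v) :
    (1 / (2 * Real.sqrt 2)) * (Real.sqrt 2 *
        ∫ x in (0:ℝ)..1, ∫ z in (-1:ℝ)..1, v x (1-x) z) =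
      (1/12) * (v 1 0 (-1) + v 0 1 (-1) + v 1 0 1 + v 0 1 1)
        + (2/3) * v (1/2) (1/2) 0 := by
  obtain ⟨p, c, hdeg, hval⟩ := hv
  -- degree bound for each monomial in the support
  have hm : ∀ m ∈ p.support, m 0 + m 1 + m 2 ≤ 2 := by
    intro m hmem
    have h1 := (MvPolynomial.le_totalDegree hmem).trans hdeg
    rwa [Finsupp.sum_fintype _ _ (fun _ => rfl), Fin.sum_univ_three] at h1
  -- pointwise representation of v on the face
  have hrep : ∀ x z : ℝ, v x (1-x) z =
      (∑ m ∈ p.support, MvPolynomial.coeff m p * (x^(m 0)*(1-x)^(m 1)*z^(m 2)))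
        + c * phi x (1-x) z := by
    intro x z
    rw [hval]
    congr 1
    rw [MvPolynomial.eval_eq']
    refine Finset.sum_congr rfl fun m _ => ?_
    rw [Fin.prod_univ_three]
    simp [Matrix.cons_val_zero, Matrix.cons_val_one]
  -- the phi part integrates to zero in z
  have hphi0 : ∀ x : ℝ, (∫ z in (-1:ℝ)..1, phi x (1-x) z) = 0 := by
    intro x
    have e : ∀ z : ℝ, phi x (1-x) z = (x*(1-x) - 5/12)*z^1 + (5/12)*z^3 := by
      intro z; unfold phi; ring
    simp_rw [e]
    rw [integral_add (f := fun z:ℝ => (x*(1-x) - 5/12)*z^1) (g := fun z:ℝ => (5/12)*z^3)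
        ((continuous_const.mul (continuous_pow 1)).intervalIntegrable _ _)
        ((continuous_const.mul (continuous_pow 3)).intervalIntegrable _ _),
      integral_const_mul, integral_const_mul, integral_pow, integral_pow]
    norm_num
  -- the inner integral
  have hinner : ∀ x : ℝ, (∫ z in (-1:ℝ)..1, v x (1-x) z) =
      ∑ m ∈ p.support, MvPolynomial.coeff m p * (x^(m 0)*(1-x)^(m 1)*Ck (m 2)) := by
    intro x
    simp_rw [hrep]
    rw [integral_add
        ((continuous_finset_sum _ fun m _ =>
          continuous_const.mul (continuous_const.mul (continuous_pow _)) :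
          Continuous fun z:ℝ => ∑ m ∈ p.support,
            MvPolynomial.coeff m p * (x^(m 0)*(1-x)^(m 1)*z^(m 2))).intervalIntegrable _ _)
        ((by unfold phi; fun_prop : Continuous fun z:ℝ => c * phi x (1-x) z).intervalIntegrable _ _),
      integral_const_mul, hphi0, mul_zero, add_zero,
      integral_finset_sum (f := fun m z =>
          MvPolynomial.coeff m p * (x^(m 0)*(1-x)^(m 1)*z^(m 2))) (fun m _ =>
        (continuous_const.mul (continuous_const.mul (continuous_pow _)) : Continuous fun z:ℝ =>
          MvPolynomial.coeff m p * (x^(m 0)*(1-x)^(m 1)*z^(m 2))).intervalIntegrable _ _)]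
    refine Finset.sum_congr rfl fun m _ => ?_
    rw [integral_const_mul, integral_const_mul, integral_pow]
    rfl
  -- the double integral
  have hdouble : (∫ x in (0:ℝ)..1, ∫ z in (-1:ℝ)..1, v x (1-x) z) =
      ∑ m ∈ p.support, MvPolynomial.coeff m p *
        (2 * ((1/12) * ((1:ℝ)^(m 0) * 0^(m 1) * (-1:ℝ)^(m 2) + 0^(m 0) * 1^(m 1) * (-1:ℝ)^(m 2)
          + (1:ℝ)^(m 0) * 0^(m 1) * 1^(m 2) + 0^(m 0) * 1^(m 1) * 1^(m 2))
        + (2/3) * ((1/2:ℝ)^(m 0) * (1/2:ℝ)^(m 1) * (0:ℝ)^(m 2)))) := by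
    simp_rw [hinner]
    rw [integral_finset_sum (f := fun m x =>
        MvPolynomial.coeff m p * (x^(m 0)*(1-x)^(m 1)*Ck (m 2))) (fun m _ =>
      (continuous_const.mul ((((continuous_pow _).mul
          ((continuous_const.sub continuous_id).pow _)).mul continuous_const)) : Continuous fun x:ℝ =>
        MvPolynomial.coeff m p * (x^(m 0)*(1-x)^(m 1)*Ck (m 2))).intervalIntegrable _ _)]
    refine Finset.sum_congr rfl fun m hmem => ?_
    rw [integral_const_mul, quad' _ _ _ (hm m hmem)]
  -- evaluation at the five nodes
  have heval : ∀ a b d : ℝ, MvPolynomial.eval ![a, b, d] p =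
      ∑ m ∈ p.support, MvPolynomial.coeff m p * (a^(m 0) * b^(m 1) * d^(m 2)) := by
    intro a b d
    rw [MvPolynomial.eval_eq']
    refine Finset.sum_congr rfl fun m _ => ?_
    rw [Fin.prod_univ_three]
    simp
  have hphiV : phi 1 0 (-1) = 0 ∧ phi 0 1 (-1) = 0 ∧ phi 1 0 1 = 0 ∧ phi 0 1 1 = 0 ∧
      phi (1/2) (1/2) 0 = 0 := by norm_num [phi]
  rw [hdouble, hval 1 0 (-1), hval 0 1 (-1), hval 1 0 1, hval 0 1 1, hval (1/2) (1/2) 0,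
    hphiV.1, hphiV.2.1, hphiV.2.2.1, hphiV.2.2.2.1, hphiV.2.2.2.2,
    heval, heval, heval, heval, heval]
  have hs : Real.sqrt 2 ≠ 0 := by positivity
  have h2 : (1 / (2 * Real.sqrt 2)) * Real.sqrt 2 = 1/2 := by field_simp
  rw [← mul_assoc, h2]
  simp only [mul_zero, add_zero, mul_add, Finset.mul_sum, ← Finset.sum_add_distrib]
  exact Finset.sum_congr rfl fun m _ => by ring
end
end

section
/- Let v be a polynomial in P_K = P₂(ℝ³) ⊕ span{φ} on the reference prism (φ as before), let F₅ = {(x,y,1) : x,y ≥ 0, x+y ≤ 1} be the top face, and let I_{F₅}v ∈ span{f₁,f₂,f₃,f₄} interpolate v at V₄=(0,0,1), V₅=(1,0,1), V₆=(0,1,1) and M₅=(1/3,1/3,1). Then ∫_{F₅} (v − I_{F₅}v) dσ = 0. -/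
noncomputable section

def IsQuad (w : ℝ → ℝ → ℝ) : Prop :=
  ∃ c0 c1 c2 c3 c4 c5 : ℝ, ∀ x y : ℝ,
    w x y = c0 + c1*x + c2*y + c3*x^2 + c4*x*y + c5*y^2

lemma isQuad_add {w1 w2 : ℝ → ℝ → ℝ} (h1 : IsQuad w1) (h2 : IsQuad w2) :
    IsQuad (fun x y => w1 x y + w2 x y) := by
  obtain ⟨a0,a1,a2,a3,a4,a5,ha⟩ := h1
  obtain ⟨b0,b1,b2,b3,b4,b5,hb⟩ := h2
  exact ⟨a0+b0,a1+b1,a2+b2,a3+b3,a4+b4,a5+b5, fun x y => by show w1 x y + w2 x y = _; rw [ha, hb]; ring⟩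

lemma isQuad_monomial (r : ℝ) (m n : ℕ) (h : m + n ≤ 2) :
    IsQuad (fun x y => r * (x^m * y^n)) := by
  have hm : m ≤ 2 := by omega
  have hn : n ≤ 2 := by omega
  interval_cases m <;> interval_cases n <;> first
    | exact absurd h (by omega)
    | (refine ⟨r,0,0,0,0,0, fun x y => ?_⟩; ring1)
    | (refine ⟨0,r,0,0,0,0, fun x y => ?_⟩; ring1)
    | (refine ⟨0,0,r,0,0,0, fun x y => ?_⟩; ring1)
    | (refine ⟨0,0,0,r,0,0, fun x y => ?_⟩; ring1)
    | (refine ⟨0,0,0,0,r,0, fun x y => ?_⟩; ring1)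
    | (refine ⟨0,0,0,0,0,r, fun x y => ?_⟩; ring1)

lemma isQuad_sum {α : Type*} (D : Finset α) (F : α → ℝ → ℝ → ℝ)
    (h : ∀ d ∈ D, IsQuad (F d)) :
    IsQuad (fun x y => ∑ d ∈ D, F d x y) := by
  classical
  induction D using Finset.induction_on with
  | empty => exact ⟨0,0,0,0,0,0, by simp⟩
  | @insert a s ha ih =>
    simp only [Finset.sum_insert ha]
    exact isQuad_add (h a (Finset.mem_insert_self a s))
      (ih fun d hd => h d (Finset.mem_insert_of_mem hd))

lemma integral_cubic (c0 c1 c2 c3 : ℝ) :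
    ∫ x in (0:ℝ)..1, (c0 + c1*x + c2*x^2 + c3*x^3) = c0 + c1/2 + c2/3 + c3/4 := by
  have hd : ∀ x ∈ Set.uIcc (0:ℝ) 1,
      HasDerivAt (fun t : ℝ => c0*t + c1/2*t^2 + c2/3*t^3 + c3/4*t^4)
        (c0 + c1*x + c2*x^2 + c3*x^3) x := by
    intro x _
    have h1 : HasDerivAt (fun t:ℝ => c0*t) (c0*1) x := (hasDerivAt_id x).const_mul c0
    have h2 : HasDerivAt (fun t:ℝ => c1/2*t^2) (c1/2*(2*x^1)) x := (hasDerivAt_pow 2 x).const_mul _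
    have h3 : HasDerivAt (fun t:ℝ => c2/3*t^3) (c2/3*(3*x^2)) x := (hasDerivAt_pow 3 x).const_mul _
    have h4 : HasDerivAt (fun t:ℝ => c3/4*t^4) (c3/4*(4*x^3)) x := (hasDerivAt_pow 4 x).const_mul _
    have := ((h1.add h2).add h3).add h4
    exact this.congr_deriv (by ring)
  have hint : IntervalIntegrable (fun x : ℝ => c0 + c1*x + c2*x^2 + c3*x^3) MeasureTheory.volume 0 1 :=
    (by fun_prop : Continuous fun x : ℝ => c0 + c1*x + c2*x^2 + c3*x^3).intervalIntegrable 0 1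
  rw [intervalIntegral.integral_eq_sub_of_hasDerivAt hd hint]
  norm_num

lemma integral_quad_y (A B C t : ℝ) :
    ∫ y in (0:ℝ)..t, (A + B*y + C*y^2) = A*t + B/2*t^2 + C/3*t^3 := by
  have hd : ∀ y ∈ Set.uIcc (0:ℝ) t,
      HasDerivAt (fun s : ℝ => A*s + B/2*s^2 + C/3*s^3) (A + B*y + C*y^2) y := by
    intro y _
    have h1 : HasDerivAt (fun s:ℝ => A*s) (A*1) y := (hasDerivAt_id y).const_mul A
    have h2 : HasDerivAt (fun s:ℝ => B/2*s^2) (B/2*(2*y^1)) y := (hasDerivAt_pow 2 y).const_mul _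
    have h3 : HasDerivAt (fun s:ℝ => C/3*s^3) (C/3*(3*y^2)) y := (hasDerivAt_pow 3 y).const_mul _
    have := (h1.add h2).add h3
    exact this.congr_deriv (by ring)
  have hint : IntervalIntegrable (fun y : ℝ => A + B*y + C*y^2) MeasureTheory.volume 0 t :=
    (by fun_prop : Continuous fun y : ℝ => A + B*y + C*y^2).intervalIntegrable 0 t
  rw [intervalIntegral.integral_eq_sub_of_hasDerivAt hd hint]
  ring

lemma integral_quad_triangle (d0 d1 d2 d3 d4 d5 : ℝ) :
    (∫ x in (0:ℝ)..1, ∫ y in (0:ℝ)..(1-x),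
      (d0 + d1*x + d2*y + d3*x^2 + d4*x*y + d5*y^2))
    = d0/2 + d1/6 + d2/6 + d3/12 + d4/24 + d5/12 := by
  have inner : ∀ x : ℝ,
      (∫ y in (0:ℝ)..(1-x), (d0 + d1*x + d2*y + d3*x^2 + d4*x*y + d5*y^2))
      = (d0 + d1*x + d3*x^2)*(1-x) + (d2+d4*x)/2*(1-x)^2 + d5/3*(1-x)^3 := by
    intro x
    have h := integral_quad_y (d0 + d1*x + d3*x^2) (d2 + d4*x) d5 (1-x)
    rw [← h]
    apply intervalIntegral.integral_congr
    intro y _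
    ring
  have h2 : (∫ x in (0:ℝ)..1, ∫ y in (0:ℝ)..(1-x),
      (d0 + d1*x + d2*y + d3*x^2 + d4*x*y + d5*y^2))
      = ∫ x in (0:ℝ)..1, ((d0 + d2/2 + d5/3) + (d1 - d0 + d4/2 - d2 - d5)*x
        + (d3 - d1 + d2/2 - d4 + d5)*x^2 + (-d3 + d4/2 - d5/3)*x^3) := by
    apply intervalIntegral.integral_congr
    intro x _
    simp only [inner]
    ring
  rw [h2, integral_cubic]
  ring

lemma inPK_quad {v : ℝ → ℝ → ℝ → ℝ} (hv : InPK v) : IsQuad (fun x y => v x y 1) := by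
  obtain ⟨p, c, hdeg, heq⟩ := hv
  have hsum : ∀ x y : ℝ, MvPolynomial.eval ![x, y, 1] p
      = ∑ d ∈ p.support, p.coeff d * (x ^ d 0 * y ^ d 1) := by
    intro x y
    rw [MvPolynomial.eval_eq']
    apply Finset.sum_congr rfl
    intro d _
    congr 1
    rw [Fin.prod_univ_three]
    simp
  have hq : IsQuad (fun x y => MvPolynomial.eval ![x, y, 1] p) := by
    have key : IsQuad (fun x y => ∑ d ∈ p.support, p.coeff d * (x ^ d 0 * y ^ d 1)) := by
      apply isQuad_sum
      intro d hd
      apply isQuad_monomial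
      have h1 : (d.sum fun _ e => e) ≤ 2 := le_trans (MvPolynomial.le_totalDegree hd) hdeg
      have h2 : (d.sum fun _ e => e) = d 0 + d 1 + d 2 := by
        rw [Finsupp.sum_fintype _ _ (fun _ => rfl), Fin.sum_univ_three]
      omega
    obtain ⟨c0,c1,c2,c3,c4,c5,hc⟩ := key
    have hc' : ∀ x y : ℝ, (∑ d ∈ p.support, p.coeff d * (x ^ d 0 * y ^ d 1))
        = c0 + c1*x + c2*y + c3*x^2 + c4*x*y + c5*y^2 := hc
    exact ⟨c0,c1,c2,c3,c4,c5, fun x y => by show MvPolynomial.eval ![x, y, 1] p = _; rw [hsum]; exact hc' x y⟩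
  obtain ⟨c0,c1,c2,c3,c4,c5,hc⟩ := hq
  have hc' : ∀ x y : ℝ, MvPolynomial.eval ![x, y, 1] p
      = c0 + c1*x + c2*y + c3*x^2 + c4*x*y + c5*y^2 := hc
  refine ⟨c0, c1 + c, c2 + c, c3 - c, c4 - c, c5 - c, fun x y => ?_⟩
  show v x y 1 = _
  rw [heq, hc']
  unfold phi
  ring

lemma inSpanF_quad {g : ℝ → ℝ → ℝ} (hg : InSpanF g) : IsQuad g := by
  obtain ⟨a, b, c, d, hgd⟩ := hg
  refine ⟨a, -2*a - c + 3*d, -2*a - b + 3*d, a+b+c-3*d, a+b+c-3*d, a+b+c-3*d,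
    fun x y => ?_⟩
  rw [hgd]
  unfold f1 f2 f3 f4
  ring

/-- For `v ∈ P_K` and `g = I_{F₅}v ∈ span{f₁,f₂,f₃,f₄}` interpolating `v` at
the three vertices and the centroid of the top face `F₅`, the integral of the
residual `v − I_{F₅}v` over `F₅` vanishes. -/
theorem top_face_residual_integral_zero (v : ℝ → ℝ → ℝ → ℝ) (hv : InPK v)
    (g : ℝ → ℝ → ℝ) (hg : InSpanF g)
    (h1 : g 0 0 = v 0 0 1) (h2 : g 1 0 = v 1 0 1) (h3 : g 0 1 = v 0 1 1)
    (h4 : g (1/3) (1/3) = v (1/3) (1/3) 1) :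
    (∫ x in (0:ℝ)..1, ∫ y in (0:ℝ)..(1-x), (v x y 1 - g x y)) = 0 := by
  obtain ⟨p0,p1,p2,p3,p4,p5,hp0⟩ := inPK_quad hv
  obtain ⟨q0,q1,q2,q3,q4,q5,hq⟩ := inSpanF_quad hg
  have hp : ∀ x y : ℝ, v x y 1
      = p0 + p1*x + p2*y + p3*x^2 + p4*x*y + p5*y^2 := hp0
  rw [hq 0 0, hp 0 0] at h1
  rw [hq 1 0, hp 1 0] at h2
  rw [hq 0 1, hp 0 1] at h3
  rw [hq (1/3) (1/3), hp (1/3) (1/3)] at h4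
  norm_num at h1 h2 h3 h4
  have key : (∫ x in (0:ℝ)..1, ∫ y in (0:ℝ)..(1-x), (v x y 1 - g x y))
      = ∫ x in (0:ℝ)..1, ∫ y in (0:ℝ)..(1-x),
        ((p0-q0) + (p1-q1)*x + (p2-q2)*y + (p3-q3)*x^2 + (p4-q4)*x*y + (p5-q5)*y^2) := by
    apply intervalIntegral.integral_congr
    intro x _
    apply intervalIntegral.integral_congr
    intro y _
    beta_reduce
    rw [hp x y, hq x y]
    ring
  rw [key, integral_quad_triangle]
  linarith
end
end

section
/- Let K be the reference prism and let v ∈ P_K = P₂(ℝ³) ⊕ span{φ} with φ = (5/12)z(z²−1) + z(λ₁λ₂+λ₂λ₃+λ₃λ₁). Let η₁ be the affine function on the side face F₁ = {x+y=1, 0≤x≤1, −1≤z≤1} with η₁(V₅) = η₁(V₆) = 1 and η₁(V₂) = η₁(V₃) = −1 (namely η₁ = z on F₁). Then (1/|F₁|) ∫_{F₁} v η₁ dσ = (1/12)(v(V₅) + v(V₆) − v(V₂) − v(V₃)), where |F₁| = 2√2. -/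
noncomputable section

open intervalIntegral MeasureTheory

/-- the value of `∫ z in -1..1, z^c * z`. -/
def Dz (c : ℕ) : ℝ := ((1:ℝ)^(c+1+1) - (-1:ℝ)^(c+1+1))/((c+1:ℕ)+1)

lemma hin (a b c : ℕ) (x : ℝ) :
    (∫ z in (-1:ℝ)..1, (x^a*(1-x)^b*z^c)*z) = x^a*(1-x)^b * Dz c := by
  simp_rw [show ∀ z : ℝ, (x^a*(1-x)^b*z^c)*z = (x^a*(1-x)^b) * z^(c+1) from
    fun z => by ring]
  rw [intervalIntegral.integral_const_mul, integral_pow, Dz]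

lemma hinphi (x : ℝ) :
    (∫ z in (-1:ℝ)..1, phi x (1-x) z * z) = (2/3)*(x - x^2) - 1/9 := by
  simp_rw [show ∀ z : ℝ, phi x (1-x) z * z = (5/12)*z^4 + (x*(1-x)-5/12)*z^2 from
    fun z => by unfold phi; ring]
  rw [intervalIntegral.integral_add ((by fun_prop : Continuous _).intervalIntegrable _ _)
    ((by fun_prop : Continuous _).intervalIntegrable _ _),
    intervalIntegral.integral_const_mul, intervalIntegral.integral_const_mul]
  norm_num [integral_pow]
  ring

lemma key' (a b c : ℕ) (h : a + b + c ≤ 2) :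
    (1/2 : ℝ) * ∫ x in (0:ℝ)..1, x^a * (1-x)^b * Dz c =
    (1/12) * ((1:ℝ)^a * 0^b * 1^c + (0:ℝ)^a * 1^b * 1^c
      - 1^a * 0^b * (-1:ℝ)^c - 0^a * 1^b * (-1:ℝ)^c) := by
  rw [intervalIntegral.integral_mul_const]
  have e1 : ∫ x in (0:ℝ)..1, (1:ℝ) = 1 := by simp
  have ex : ∫ x in (0:ℝ)..1, x = 1/2 := by norm_num [integral_id]
  have ex2 : ∫ x in (0:ℝ)..1, x^2 = 1/3 := by norm_num [integral_pow]
  have e1m : ∫ x in (0:ℝ)..1, (1 - x) = 1/2 := by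
    rw [intervalIntegral.integral_sub ((by fun_prop : Continuous _).intervalIntegrable _ _)
      ((by fun_prop : Continuous _).intervalIntegrable _ _)]
    norm_num [integral_id]
  have e2m : ∫ x in (0:ℝ)..1, (1 - x)^2 = 1/3 := by
    simp_rw [show ∀ x:ℝ, (1-x)^2 = 1 - (2*x - x^2) from fun x => by ring]
    rw [intervalIntegral.integral_sub ((by fun_prop : Continuous _).intervalIntegrable _ _)
      ((by fun_prop : Continuous _).intervalIntegrable _ _),
      intervalIntegral.integral_sub ((by fun_prop : Continuous _).intervalIntegrable _ _)
      ((by fun_prop : Continuous _).intervalIntegrable _ _),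
      intervalIntegral.integral_const_mul]
    norm_num [integral_id, integral_pow]
  have exm : ∫ x in (0:ℝ)..1, x * (1 - x) = 1/6 := by
    simp_rw [show ∀ x:ℝ, x*(1-x) = x - x^2 from fun x => by ring]
    rw [intervalIntegral.integral_sub ((by fun_prop : Continuous _).intervalIntegrable _ _)
      ((by fun_prop : Continuous _).intervalIntegrable _ _)]
    norm_num [integral_id, integral_pow]
  have ha : a ≤ 2 := by omega
  have hb : b ≤ 2 := by omega
  have hc : c ≤ 2 := by omega
  interval_cases a <;> interval_cases b <;> interval_cases c <;>
    first | omega | norm_num [Dz, e1, ex, ex2, e1m, e2m, exm]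

lemma hzero : ∫ x in (0:ℝ)..1, ((2/3)*(x - x^2) - 1/9) = 0 := by
  rw [intervalIntegral.integral_sub ((by fun_prop : Continuous _).intervalIntegrable _ _)
    ((by fun_prop : Continuous _).intervalIntegrable _ _),
    intervalIntegral.integral_const_mul,
    intervalIntegral.integral_sub ((by fun_prop : Continuous _).intervalIntegrable _ _)
    ((by fun_prop : Continuous _).intervalIntegrable _ _)]
  norm_num [integral_id, integral_pow]

/-- Weighted mean-value identity on the side face
`F₁ = {x+y=1, 0≤x≤1, −1≤z≤1}` (area `2√2`, surface element `dσ = √2 dx dz`)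
with the weight `η₁ = z`: for all `v ∈ P_K`,
`(1/|F₁|)∫_{F₁} v η₁ dσ = (1/12)(v(V₅)+v(V₆)−v(V₂)−v(V₃))`. -/
theorem side_face_weighted_mean (v : ℝ → ℝ → ℝ → ℝ) (hv : InPK v) :
    (1 / (2 * Real.sqrt 2)) * (Real.sqrt 2 *
        ∫ x in (0:ℝ)..1, ∫ z in (-1:ℝ)..1, v x (1-x) z * z) =
      (1/12) * (v 1 0 1 + v 0 1 1 - v 1 0 (-1) - v 0 1 (-1)) := by
  obtain ⟨p, c, hdeg, hrep⟩ := hv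
  have hs2 : Real.sqrt 2 ≠ 0 := by positivity
  rw [show ∀ I : ℝ, (1 / (2 * Real.sqrt 2)) * (Real.sqrt 2 * I) = (1/2) * I from
    fun I => by field_simp]
  -- inner integral computation
  have step1 : ∀ x : ℝ, (∫ z in (-1:ℝ)..1, v x (1-x) z * z)
      = (∑ d ∈ p.support,
          MvPolynomial.coeff d p * (x ^ d 0 * (1-x) ^ d 1 * Dz (d 2)))
        + c * ((2/3)*(x - x^2) - 1/9) := by
    intro x
    simp only [hrep, MvPolynomial.eval_eq', Fin.prod_univ_three, Matrix.cons_val_zero,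
      Matrix.cons_val_one, Matrix.head_cons, Matrix.cons_val_two, Matrix.tail_cons,
      add_mul, Finset.sum_mul]
    rw [intervalIntegral.integral_add
      (((continuous_finset_sum _ fun d _ => by fun_prop : Continuous _)).intervalIntegrable _ _)
      ((by unfold phi; fun_prop : Continuous _).intervalIntegrable _ _),
      intervalIntegral.integral_finset_sum
        (fun d _ => ((by fun_prop : Continuous _).intervalIntegrable _ _))]
    congr 1
    · refine Finset.sum_congr rfl fun d _ => ?_
      simp_rw [show ∀ z : ℝ,
        MvPolynomial.coeff d p * (x ^ d 0 * (1-x) ^ d 1 * z ^ d 2) * z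
          = MvPolynomial.coeff d p * ((x ^ d 0 * (1-x) ^ d 1 * z ^ d 2) * z) from
        fun z => by ring]
      rw [intervalIntegral.integral_const_mul, hin]
    · simp_rw [show ∀ z : ℝ, c * phi x (1-x) z * z = c * (phi x (1-x) z * z) from
        fun z => by ring]
      rw [intervalIntegral.integral_const_mul, hinphi]
  simp_rw [step1]
  rw [intervalIntegral.integral_add
      (((continuous_finset_sum _ fun d _ => by fun_prop : Continuous _)).intervalIntegrable _ _)
      ((by fun_prop : Continuous _).intervalIntegrable _ _),
    intervalIntegral.integral_finset_sum
      (fun d _ => ((by fun_prop : Continuous _).intervalIntegrable _ _)),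
    intervalIntegral.integral_const_mul, hzero, mul_zero, add_zero]
  -- expand the corner values
  simp only [hrep, MvPolynomial.eval_eq', Fin.prod_univ_three, Matrix.cons_val_zero,
    Matrix.cons_val_one, Matrix.head_cons, Matrix.cons_val_two, Matrix.tail_cons]
  rw [show phi 1 0 1 = 0 by unfold phi; norm_num,
    show phi 0 1 1 = 0 by unfold phi; norm_num,
    show phi 1 0 (-1) = 0 by unfold phi; norm_num,
    show phi 0 1 (-1) = 0 by unfold phi; norm_num]
  simp only [mul_zero, add_zero]
  rw [← Finset.sum_add_distrib, ← Finset.sum_sub_distrib, ← Finset.sum_sub_distrib,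
    Finset.mul_sum, Finset.mul_sum]
  refine Finset.sum_congr rfl fun d hd => ?_
  have hdle : d 0 + d 1 + d 2 ≤ 2 := by
    have h1 : (d.sum fun _ n => n) ≤ p.totalDegree := MvPolynomial.le_totalDegree hd
    have h2 : (d.sum fun _ n => n) = d 0 + d 1 + d 2 := by
      rw [Finsupp.sum_fintype _ _ (fun _ => rfl), Fin.sum_univ_three]
    omega
  have := key' (d 0) (d 1) (d 2) hdle
  rw [intervalIntegral.integral_const_mul, mul_left_comm, this]
  ring
end
end
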